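/- For the same 3×4 bimatrix game (A with rows (11,11,3,3),(0,12,0,12),(6,0,6,0); B with rows (3,3,0,0),(2,0,7,5),(0,1,0,1)), for every q with 1/12 ≤ q ≤ 1, the profile σ¹ = (1,0,0), σ² = (q, 1−q, 0, 0) is a Nash equilibrium with payoffs (11, 3). -/
import Mathlib


noncomputable def vsA : Matrix (Fin 3) (Fin 4) ℝ :=
  !![11, 11, 3, 3; 0, 12, 0, 12; 6, 0, 6, 0]

noncomputable def vsB : Matrix (Fin 3) (Fin 4) ℝ :=
  !![3, 3, 0, 0; 2, 0, 7, 5; 0, 1, 0, 1]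

/-- A profile (σ¹, σ²) is a Nash equilibrium of the bimatrix game (A, B). -/
def IsBimatrixNash (A B : Matrix (Fin 3) (Fin 4) ℝ) (σ₁ : Fin 3 → ℝ) (σ₂ : Fin 4 → ℝ) : Prop :=
  (∀ i, 0 ≤ σ₁ i) ∧ (∑ i, σ₁ i) = 1 ∧ (∀ j, 0 ≤ σ₂ j) ∧ (∑ j, σ₂ j) = 1 ∧
  (∀ i, ∑ j, A i j * σ₂ j ≤ ∑ i', ∑ j, σ₁ i' * A i' j * σ₂ j) ∧
  (∀ j, ∑ i, σ₁ i * B i j ≤ ∑ i, ∑ j', σ₁ i * B i j' * σ₂ j')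

theorem typeA_equilibria (q : ℝ) (hq : 1/12 ≤ q) (hq1 : q ≤ 1) :
    IsBimatrixNash vsA vsB ![1, 0, 0] ![q, 1 - q, 0, 0] ∧
    (∑ i, ∑ j, (![1, 0, 0] : Fin 3 → ℝ) i * vsA i j * (![q, 1 - q, 0, 0] : Fin 4 → ℝ) j) = 11 ∧
    (∑ i, ∑ j, (![1, 0, 0] : Fin 3 → ℝ) i * vsB i j * (![q, 1 - q, 0, 0] : Fin 4 → ℝ) j) = 3 := by

  refine ⟨⟨?_, ?_, ?_, ?_, ?_, ?_⟩, ?_, ?_⟩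
  · intro i; fin_cases i <;> simp
  · simp [Fin.sum_univ_succ]
  · intro j; fin_cases j <;> simp <;> linarith
  · simp [Fin.sum_univ_succ]
  · intro i; fin_cases i <;>
      simp [vsA, Fin.sum_univ_succ, Matrix.cons_val_zero, Matrix.cons_val_one] <;> nlinarith
  · intro j; fin_cases j <;>
      simp [vsB, Fin.sum_univ_succ] <;> nlinarith
  · simp [vsA, Fin.sum_univ_succ]; ring
  · simp [vsB, Fin.sum_univ_succ]; ring
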